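/- arXiv:2102.00857 — 2 statements merged into one kernel-verified Lean document; each statement's English description precedes it below -/
import Mathlib

section
/- A bounded subset A of a Banach space X is relatively weakly compact if and only if every sequence in A admits a convex block subsequence that converges in norm, and this is also equivalent to every sequence in A admitting a weakly convergent convex block subsequence. -/
open Filter Topology Metric Set NormedSpace

noncomputable section

/-- `y` is a convex block subsequence of `x`. -/
def IsConvexBlock {E : Type*} [AddCommGroup E] [Module ℝ E] (x y : ℕ → E) : Prop :=
  ∃ k : ℕ → ℕ, k 0 = 0 ∧ StrictMono k ∧
    ∀ n, y n ∈ convexHull ℝ (x '' Set.Ico (k n) (k (n + 1)))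

variable (X : Type*) [NormedAddCommGroup X] [NormedSpace ℝ X]

/-- A set is weakly compact if its image in the weak topology is compact. -/
def WeaklyCompact (K : Set X) : Prop := IsCompact (toWeakSpace ℝ X '' K)

/-- A sequence is weakly null. -/
def WeaklyNull (x : ℕ → X) : Prop :=
  ∀ f : X →L[ℝ] ℝ, Tendsto (fun n => f (x n)) atTop (𝓝 0)

/-- A sequence in the dual is weak* null. -/
def WeakStarNull (f : ℕ → X →L[ℝ] ℝ) : Prop :=
  ∀ x : X, Tendsto (fun n => f n x) atTop (𝓝 0)

/-- A sequence in the dual is weak* Cauchy. -/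
def WeakStarCauchy (f : ℕ → X →L[ℝ] ℝ) : Prop :=
  ∀ x : X, ∃ L : ℝ, Tendsto (fun n => f n x) atTop (𝓝 L)

variable {X}

/-- α((f_n)) = sup over weakly compact K ⊆ B_X of limsup_n sup_{x ∈ K} |⟨f_n, x⟩|. -/
def alphaQ (f : ℕ → X →L[ℝ] ℝ) : ℝ :=
  sSup { r | ∃ K : Set X, K ⊆ closedBall 0 1 ∧ WeaklyCompact X K ∧
    r = limsup (fun n => sSup ((fun x => |f n x|) '' K)) atTop }

/-- β((f_n)) = sup over weakly null (x_n) in B_X of limsup_n |⟨f_n, x_n⟩|. -/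
def betaQ (f : ℕ → X →L[ℝ] ℝ) : ℝ :=
  sSup { r | ∃ x : ℕ → X, (∀ n, x n ∈ closedBall (0 : X) 1) ∧ WeaklyNull X x ∧
    r = limsup (fun n => |f n (x n)|) atTop }

/-- ca_{ρ*}((f_n)): measures Mackey-Cauchyness. -/
def caRho (f : ℕ → X →L[ℝ] ℝ) : ℝ :=
  sSup { r | ∃ K : Set X, K ⊆ closedBall 0 1 ∧ WeaklyCompact X K ∧
    r = ⨅ n : ℕ, sSup { t | ∃ k ≥ n, ∃ l ≥ n, ∃ x ∈ K, t = |(f k - f l) x| } }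

/-- ca((z_n)) = inf_n sup_{k,l ≥ n} ‖z_k - z_l‖. -/
def caSeq {E : Type*} [NormedAddCommGroup E] (z : ℕ → E) : ℝ :=
  ⨅ n : ℕ, sSup { r | ∃ k ≥ n, ∃ l ≥ n, r = ‖z k - z l‖ }

variable (X)

def K1 : ℝ :=
  sSup { r | ∃ f : ℕ → X →L[ℝ] ℝ, (∀ n, ‖f n‖ ≤ 1) ∧ WeakStarNull X f ∧
    r = sInf { s | ∃ g, IsConvexBlock f g ∧ s = alphaQ g } }

def K2 : ℝ :=
  sSup { r | ∃ f : ℕ → X →L[ℝ] ℝ, (∀ n, ‖f n‖ ≤ 1) ∧ WeakStarNull X f ∧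
    r = sInf { s | ∃ g, IsConvexBlock f g ∧ s = betaQ g } }

def K3 : ℝ :=
  sSup { r | ∃ f : ℕ → X →L[ℝ] ℝ, (∀ n, ‖f n‖ ≤ 1) ∧ WeakStarCauchy X f ∧
    r = sInf { s | ∃ g, IsConvexBlock f g ∧ s = caRho g } }

/-- Property (K). -/
def PropertyK : Prop :=
  ∀ f : ℕ → X →L[ℝ] ℝ, WeakStarNull X f → ∃ g, IsConvexBlock f g ∧ alphaQ g = 0

/-- The Grothendieck property: every weak* null sequence in the dual is weakly null. -/
def Grothendieck : Prop :=
  ∀ f : ℕ → X →L[ℝ] ℝ, WeakStarNull X f →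
    ∀ Φ : (X →L[ℝ] ℝ) →L[ℝ] ℝ, Tendsto (fun n => Φ (f n)) atTop (𝓝 0)

def GQ : ℝ :=
  sSup { r | ∃ f : ℕ → X →L[ℝ] ℝ, (∀ n, ‖f n‖ ≤ 1) ∧ WeakStarNull X f ∧
    r = sInf { s | ∃ g, IsConvexBlock f g ∧ s = limsup (fun n => ‖g n‖) atTop } }

def RQ : ℝ :=
  sSup { r | ∃ x : ℕ → X, (∀ n, x n ∈ closedBall (0 : X) 1) ∧
    r = sInf { s | ∃ z, IsConvexBlock x z ∧ s = caSeq z } }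

/-- weak* cluster points in the bidual of a sequence in the bidual. -/
def WStarClusterPts (u : ℕ → (X →L[ℝ] ℝ) →L[ℝ] ℝ) : Set ((X →L[ℝ] ℝ) →L[ℝ] ℝ) :=
  { z | MapClusterPt (StrongDual.toWeakDual (𝕜 := ℝ) z) atTop
      (fun n => StrongDual.toWeakDual (𝕜 := ℝ) (u n)) }

def wckQ (A : Set X) : ℝ :=
  sSup { r | ∃ x : ℕ → X, (∀ n, x n ∈ A) ∧
    r = sInf { s | ∃ z ∈ WStarClusterPts X (fun n => inclusionInDoubleDual ℝ X (x n)),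
      ∃ v : X, s = ‖z - inclusionInDoubleDual ℝ X v‖ } }


/-!
If the weak closure of `A` is compact, a sequence in `A` has a weak cluster point `a`. By Mazur's
theorem `a` lies in the norm closure of the convex hull of every tail, so successive finite convex
combinations of disjoint blocks converge to `a` in norm.

Conversely (Whitley's argument), by Banach–Alaoglu it suffices that every point `z` of the
weak* closure of `A` in the bidual lies in `X`. Choose inductively `x n ∈ A` and finite sets of
functionals of norm `≤ 1` such that the new set 2-norms `span {z, x 0, …, x (n - 1)}` and `f (x n)`
is `1 / (n + 1)`-close to `z f` on all functionals chosen so far. If a convex block subsequence of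
`x` converges weakly to `L`, then `z f = f L` on all chosen functionals, while `z - L` lies in the
closed span of `z` and the `x n`, which these functionals norm; hence `z = L`.
-/

lemma IsConvexBlock.map {E F : Type*} [AddCommGroup E] [Module ℝ E] [AddCommGroup F] [Module ℝ F]
    {x y : ℕ → E} (h : IsConvexBlock x y) (f : E →ₗ[ℝ] F) : IsConvexBlock (f ∘ x) (f ∘ y) := by
  obtain ⟨k, hk0, hk, hy⟩ := h
  refine ⟨k, hk0, hk, fun n => ?_⟩
  rw [Set.image_comp, ← f.image_convexHull]
  exact mem_image_of_mem f (hy n)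

section ConvexBlock

variable {E : Type*} [SeminormedAddCommGroup E] [NormedSpace ℝ E]

lemma IsConvexBlock.tendsto {x y : ℕ → E} {c : E} (h : IsConvexBlock x y)
    (hx : Tendsto x atTop (𝓝 c)) : Tendsto y atTop (𝓝 c) := by
  obtain ⟨k, -, hk, hy⟩ := h
  rw [Metric.tendsto_atTop] at hx ⊢
  intro ε hε
  obtain ⟨N, hN⟩ := hx ε hε
  refine ⟨N, fun n hn => convexHull_min ?_ (convex_ball c ε) (hy n)⟩
  rintro - ⟨i, hi, rfl⟩
  exact hN i (hn.trans ((hk.id_le n).trans hi.1))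

lemma exists_lt_mem_convexHull_image_Ico_dist_lt {x : ℕ → E} {m : ℕ} {a : E}
    (ha : a ∈ closure (convexHull ℝ (x '' Ici m))) {ε : ℝ} (hε : 0 < ε) :
    ∃ N, m < N ∧ ∃ w ∈ convexHull ℝ (x '' Ico m N), dist w a < ε := by
  set s : ℕ → Set E := fun N => convexHull ℝ (x '' Ico m (m + N + 1))
  have hs : Monotone s := fun N N' h =>
    convexHull_mono (image_mono (Ico_subset_Ico_right (by omega)))
  have hsub : convexHull ℝ (x '' Ici m) ⊆ ⋃ N, s N := by
    refine convexHull_min ?_ (hs.directed_le.convex_iUnion fun N => convex_convexHull ℝ _)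
    rintro - ⟨i, hi, rfl⟩
    exact mem_iUnion.2 ⟨i, subset_convexHull ℝ _ ⟨i, ⟨hi, by omega⟩, rfl⟩⟩
  obtain ⟨w, hw, hwa⟩ := Metric.mem_closure_iff.1 ha ε hε
  obtain ⟨N, hwN⟩ := mem_iUnion.1 (hsub hw)
  exact ⟨m + N + 1, by omega, w, hwN, by rwa [dist_comm]⟩

lemma exists_isConvexBlock_tendsto {x : ℕ → E} {a : E}
    (ha : ∀ m, a ∈ closure (convexHull ℝ (x '' Ici m))) :
    ∃ z, IsConvexBlock x z ∧ Tendsto z atTop (𝓝 a) := by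
  choose N hN w hw hwa using fun m (n : ℕ) =>
    exists_lt_mem_convexHull_image_Ico_dist_lt (ha m) (Nat.one_div_pos_of_nat (n := n))
  let k : ℕ → ℕ := fun n => Nat.rec 0 (fun n m => N m n) n
  refine ⟨fun n => w (k n) n, ⟨k, rfl, strictMono_nat_of_lt_succ fun n => hN (k n) n,
    fun n => hw (k n) n⟩, ?_⟩
  refine tendsto_iff_dist_tendsto_zero.2 <| squeeze_zero (fun _ => dist_nonneg)
    (fun n => (hwa (k n) n).le) tendsto_one_div_add_atTop_nhds_zero_nat

end ConvexBlock

section Mazur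

variable {E : Type*} [NormedAddCommGroup E] [NormedSpace ℝ E]

lemma Convex.mem_closure_of_toWeakSpace_mem_closure {s : Set E} (hs : Convex ℝ s) {a : E}
    (ha : toWeakSpace ℝ E a ∈ closure (toWeakSpace ℝ E '' s)) : a ∈ closure s := by
  rwa [← hs.toWeakSpace_closure ℝ, (toWeakSpace ℝ E).injective.mem_set_image] at ha

lemma tendsto_toWeakSpace_iff {ι : Type*} {l : Filter ι} {u : ι → E} {a : E} :
    Tendsto (fun i => toWeakSpace ℝ E (u i)) l (𝓝 (toWeakSpace ℝ E a)) ↔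
      ∀ f : StrongDual ℝ E, Tendsto (fun i => f (u i)) l (𝓝 (f a)) := by
  rw [(isEmbedding_inclusionInDoubleDualWeak ℝ E).tendsto_nhds_iff,
    tendsto_iff_forall_eval_tendsto_topDualPairing]
  rfl

lemma Convex.mem_closure_of_forall_tendsto_apply {s : Set E} (hs : Convex ℝ s) {ι : Type*}
    {l : Filter ι} [l.NeBot] {u : ι → E} (hu : ∀ i, u i ∈ s) {a : E}
    (ha : ∀ f : StrongDual ℝ E, Tendsto (fun i => f (u i)) l (𝓝 (f a))) : a ∈ closure s :=
  hs.mem_closure_of_toWeakSpace_mem_closure <| mem_closure_of_tendsto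
    (tendsto_toWeakSpace_iff.2 ha) (Eventually.of_forall fun i => mem_image_of_mem _ (hu i))

theorem exists_isConvexBlock_tendsto_of_mapClusterPt {x : ℕ → E} {a : E}
    (ha : MapClusterPt (toWeakSpace ℝ E a) atTop (fun n => toWeakSpace ℝ E (x n))) :
    ∃ z, IsConvexBlock x z ∧ Tendsto z atTop (𝓝 a) := by
  refine exists_isConvexBlock_tendsto fun m =>
    (convex_convexHull ℝ _).mem_closure_of_toWeakSpace_mem_closure ?_
  refine closure_mono ?_ (mapClusterPt_atTop_iff_forall_mem_closure.1 ha m)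
  rintro - ⟨i, hi, rfl⟩
  exact mem_image_of_mem _ (subset_convexHull ℝ _ (mem_image_of_mem x hi))

theorem exists_isConvexBlock_tendsto_of_isCompact_closure {A : Set E}
    (hA : IsCompact (closure (toWeakSpace ℝ E '' A)))
    (x : ℕ → E) (hx : ∀ n, x n ∈ A) : ∃ z, IsConvexBlock x z ∧ ∃ L, Tendsto z atTop (𝓝 L) := by
  obtain ⟨ℓ, -, hℓ⟩ := hA.exists_mapClusterPt (f := atTop) (u := fun n => toWeakSpace ℝ E (x n))
    (tendsto_principal.2 <| .of_forall fun n => subset_closure (mem_image_of_mem _ (hx n)))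
  obtain ⟨z, hz, hzℓ⟩ := exists_isConvexBlock_tendsto_of_mapClusterPt
    (a := (toWeakSpace ℝ E).symm ℓ) (by simpa using hℓ)
  exact ⟨z, hz, _, hzℓ⟩

end Mazur

section Norming

variable {Y : Type*} [NormedAddCommGroup Y] [NormedSpace ℝ Y]

lemma exists_finset_norming (F : Submodule ℝ (StrongDual ℝ Y)) [FiniteDimensional ℝ F] :
    ∃ G : Finset Y, (∀ y ∈ G, ‖y‖ ≤ 1) ∧ ∀ v ∈ F, ∃ y ∈ G, ‖v‖ ≤ 2 * |v y| := by
  classical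
  have hcover : sphere (0 : F) 1 ⊆
      ⋃ y ∈ ball (0 : Y) 1, {u : F | 1 / 2 < |(u : StrongDual ℝ Y) y|} := by
    intro u hu
    have hu1 : ‖(u : StrongDual ℝ Y)‖ = 1 := mem_sphere_zero_iff_norm.1 hu
    obtain ⟨y, hy, hyu⟩ := (u : StrongDual ℝ Y).exists_lt_apply_of_lt_opNorm (r := 1 / 2)
      (by rw [hu1]; norm_num)
    exact mem_iUnion₂.2 ⟨y, mem_ball_zero_iff.2 hy, hyu⟩
  obtain ⟨t, ht, htfin, hcov⟩ := (isCompact_sphere (0 : F) 1).elim_finite_subcover_image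
    (c := fun y => {u : F | 1 / 2 < |(u : StrongDual ℝ Y) y|})
    (fun y _ => isOpen_lt continuous_const <| continuous_abs.comp <|
      (ContinuousLinearMap.apply ℝ ℝ y).continuous.comp continuous_subtype_val) hcover
  refine ⟨insert 0 htfin.toFinset, ?_, fun v hv => ?_⟩
  · intro y hy
    rcases Finset.mem_insert.1 hy with rfl | hy
    · simp
    · exact (mem_ball_zero_iff.1 (ht (htfin.mem_toFinset.1 hy))).le
  rcases eq_or_ne v 0 with rfl | hv0
  · exact ⟨0, Finset.mem_insert_self _ _, by simp⟩
  have hpos : 0 < ‖v‖ := norm_pos_iff.2 hv0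
  have hu : (‖v‖⁻¹ • ⟨v, hv⟩ : F) ∈ sphere (0 : F) 1 := by
    refine (mem_sphere_zero_iff_norm (E := F)).2 ?_
    change ‖‖v‖⁻¹ • v‖ = 1
    rw [norm_smul, norm_inv, norm_norm, inv_mul_cancel₀ hpos.ne']
  obtain ⟨y, hyt, hy⟩ := mem_iUnion₂.1 (hcov hu)
  refine ⟨y, Finset.mem_insert_of_mem (htfin.mem_toFinset.2 hyt), ?_⟩
  simp only [mem_ofPred_eq, SetLike.val_smul, smul_apply, smul_eq_mul,
    abs_mul, abs_inv, abs_norm] at hy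
  rw [← div_eq_inv_mul, lt_div_iff₀ hpos] at hy
  linarith

lemma eq_zero_of_mem_closure_of_norming {M : Set (StrongDual ℝ Y)} {D : Set Y}
    (hD : ∀ y ∈ D, ‖y‖ ≤ 1) (hM : ∀ u ∈ M, ∃ y ∈ D, ‖u‖ ≤ 2 * |u y|)
    {v : StrongDual ℝ Y} (hv : v ∈ closure M) (hvD : ∀ y ∈ D, v y = 0) : v = 0 := by
  refine norm_le_zero_iff.1 <| le_of_forall_pos_le_add fun ε hε => ?_
  obtain ⟨u, hu, hvu⟩ := Metric.mem_closure_iff.1 hv (ε / 3) (by positivity)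
  obtain ⟨y, hyD, huy⟩ := hM u hu
  have hvu' : ‖u - v‖ < ε / 3 := by rwa [dist_comm, dist_eq_norm] at hvu
  have huy_small : |u y| ≤ ε / 3 := by
    calc |u y| = |(u - v) y| := by simp [hvD y hyD]
      _ ≤ ‖u - v‖ * ‖y‖ := (u - v).le_opNorm y
      _ ≤ ε / 3 := by nlinarith [hD y hyD, norm_nonneg (u - v), norm_nonneg y]
  calc ‖v‖ ≤ ‖u‖ + ‖u - v‖ := norm_le_insert u v
    _ ≤ 0 + ε := by linarith

end Norming

lemma WeakDual.exists_mem_forall_abs_sub_lt_of_mem_closure {V : Type*} [NormedAddCommGroup V]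
    [NormedSpace ℝ V] {S : Set (WeakDual ℝ V)} {ζ : WeakDual ℝ V} (hζ : ζ ∈ closure S)
    (G : Finset V) {ε : ℝ} (hε : 0 < ε) : ∃ η ∈ S, ∀ f ∈ G, |ζ f - η f| < ε := by
  set U : Set (WeakDual ℝ V) := ⋂ f ∈ G, (fun η : WeakDual ℝ V => η f) ⁻¹' ball (ζ f) ε
  have hU : IsOpen U :=
    isOpen_biInter_finset fun f _ => (WeakDual.eval_continuous f).isOpen_preimage _ isOpen_ball
  have hζU : ζ ∈ U := mem_iInter₂.2 fun f _ => mem_ball_self hε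
  obtain ⟨η, hηU, hηS⟩ := mem_closure_iff.1 hζ U hU hζU
  refine ⟨η, hηS, fun f hf => ?_⟩
  simpa [Real.dist_eq, abs_sub_comm] using mem_iInter₂.1 hηU f hf

lemma Submodule.exists_mem_span_insert_image_Iio {M : Type*} [AddCommMonoid M] [Module ℝ M]
    (z : M) (y : ℕ → M) {u : M} (hu : u ∈ Submodule.span ℝ (insert z (range y))) :
    ∃ n, u ∈ Submodule.span ℝ (insert z (y '' Iio n)) := by
  have hunion : insert z (range y) = ⋃ n, insert z (y '' Iio n) := by
    ext v
    simp only [mem_insert_iff, mem_range, mem_iUnion, mem_image, mem_Iio]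
    exact ⟨fun h => h.elim (fun h => ⟨0, Or.inl h⟩) fun ⟨i, hi⟩ =>
      ⟨i + 1, Or.inr ⟨i, by omega, hi⟩⟩, fun ⟨n, h⟩ => h.imp id fun ⟨i, _, hi⟩ => ⟨i, hi⟩⟩
  rw [hunion, Submodule.span_iUnion] at hu
  exact (Submodule.mem_iSup_of_directed _ (Monotone.directed_le fun m n hmn =>
    Submodule.span_mono (insert_subset_insert (image_mono (Iio_subset_Iio hmn))))).1 hu

section Whitley

variable {E : Type*} [NormedAddCommGroup E] [NormedSpace ℝ E]

lemma exists_seq_tendsto_on_norming_set {A : Set E} (z : StrongDual ℝ (StrongDual ℝ E))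
    (hz : ∀ (G : Finset (StrongDual ℝ E)) (ε : ℝ), 0 < ε → ∃ a ∈ A, ∀ f ∈ G, |z f - f a| < ε) :
    ∃ (x : ℕ → E) (D : Set (StrongDual ℝ E)), (∀ n, x n ∈ A) ∧ (∀ f ∈ D, ‖f‖ ≤ 1) ∧
      (∀ f ∈ D, Tendsto (fun n => f (x n)) atTop (𝓝 (z f))) ∧
      ∀ u ∈ Submodule.span ℝ (insert z (range fun n => inclusionInDoubleDual ℝ E (x n))),
        ∃ f ∈ D, ‖u‖ ≤ 2 * |u f| := by
  classical
  choose N hN1 hN2 using fun P : Finset E =>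
    exists_finset_norming (Submodule.span ℝ
      ((insert z (P.image (inclusionInDoubleDual ℝ E)) : Finset _) :
        Set (StrongDual ℝ (StrongDual ℝ E))))
  choose a haA ha using fun (G : Finset (StrongDual ℝ E)) (n : ℕ) =>
    hz G (1 / (n + 1)) Nat.one_div_pos_of_nat
  -- `s n` holds the points `x 0, …, x (n - 1)` and the functionals chosen before stage `n`;
  -- stage `n` adds a set norming `span {z, x 0, …, x (n - 1)}`, then picks `x n`.
  let s : ℕ → Finset E × Finset (StrongDual ℝ E) := fun n => Nat.rec (∅, ∅)
    (fun n p => (insert (a (p.2 ∪ N p.1) n) p.1, p.2 ∪ N p.1)) n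
  let G : ℕ → Finset (StrongDual ℝ E) := fun n => (s n).2 ∪ N (s n).1
  let x : ℕ → E := fun n => a (G n) n
  have hs : ∀ n, ((s n).1 : Set E) = x '' Iio n := by
    intro n
    induction n with
    | zero => simp [s]
    | succ n ih =>
      change ((insert (x n) (s n).1 : Finset E) : Set E) = _
      rw [Finset.coe_insert, ih, ← image_insert_eq, ← Order.Iio_succ_eq_insert n]
      rfl
  have hG : Monotone G := monotone_nat_of_le_succ fun n =>
    show G n ⊆ G n ∪ N (s (n + 1)).1 from Finset.subset_union_left
  refine ⟨x, ⋃ n, (N (s n).1 : Set (StrongDual ℝ E)), fun n => haA _ _, ?_, ?_, ?_⟩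
  · simp only [mem_iUnion, Finset.mem_coe, forall_exists_index]
    exact fun f n hf => hN1 _ f hf
  · simp only [mem_iUnion, Finset.mem_coe, forall_exists_index]
    intro f m hf
    refine tendsto_iff_dist_tendsto_zero.2 <| squeeze_zero'
      (Eventually.of_forall fun _ => dist_nonneg) ?_ tendsto_one_div_add_atTop_nhds_zero_nat
    filter_upwards [Ici_mem_atTop m] with n hn
    rw [Real.dist_eq, abs_sub_comm]
    exact (ha _ n f (hG hn (Finset.mem_union_right _ hf))).le
  · intro u hu
    obtain ⟨n, hun⟩ := Submodule.exists_mem_span_insert_image_Iio _ _ hu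
    rw [← image_image (inclusionInDoubleDual ℝ E) x, ← hs n] at hun
    obtain ⟨f, hf, hfu⟩ := hN2 (s n).1 u (by simpa using hun)
    exact ⟨f, mem_iUnion.2 ⟨n, hf⟩, hfu⟩

theorem eq_inclusionInDoubleDual_of_isConvexBlock {z : StrongDual ℝ (StrongDual ℝ E)}
    {x : ℕ → E} {D : Set (StrongDual ℝ E)} (hD : ∀ f ∈ D, ‖f‖ ≤ 1)
    (hxz : ∀ f ∈ D, Tendsto (fun n => f (x n)) atTop (𝓝 (z f)))
    (hnorm : ∀ u ∈ Submodule.span ℝ (insert z (range fun n => inclusionInDoubleDual ℝ E (x n))),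
      ∃ f ∈ D, ‖u‖ ≤ 2 * |u f|)
    {w : ℕ → E} (hw : IsConvexBlock x w) {L : E}
    (hL : ∀ f : StrongDual ℝ E, Tendsto (fun n => f (w n)) atTop (𝓝 (f L))) :
    z = inclusionInDoubleDual ℝ E L := by
  set j := inclusionInDoubleDual ℝ E
  set M := Submodule.span ℝ (insert z (range fun n => j (x n)))
  have hzL : ∀ f ∈ D, z f = f L := fun f hf =>
    tendsto_nhds_unique ((hw.map (f : E →ₗ[ℝ] ℝ)).tendsto (hxz f hf)) (hL f)
  have hw_span : ∀ n, w n ∈ Submodule.span ℝ (range x) := by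
    obtain ⟨k, -, -, hwk⟩ := hw
    exact fun n => convexHull_min ((image_subset_range _ _).trans Submodule.subset_span)
      (Submodule.convex _) (hwk n)
  have hL_span : L ∈ closure (Submodule.span ℝ (range x) : Set E) :=
    (Submodule.convex _).mem_closure_of_forall_tendsto_apply hw_span hL
  have hjL : j L ∈ M.topologicalClosure := by
    have hmap : j '' (Submodule.span ℝ (range x)) ⊆ M := by
      refine (Submodule.image_span_subset_span j.toLinearMap _).trans (Submodule.span_mono ?_)
      rw [ContinuousLinearMap.coe_coe, ← range_comp]
      exact subset_insert _ _
    exact closure_mono hmap (image_closure_subset_closure_image j.continuous ⟨L, hL_span, rfl⟩)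
  have hz : z ∈ M.topologicalClosure :=
    M.le_topologicalClosure (Submodule.subset_span (mem_insert _ _))
  refine sub_eq_zero.1 <| eq_zero_of_mem_closure_of_norming hD hnorm ?_ fun f hf => ?_
  · rw [← M.topologicalClosure_coe]
    exact M.topologicalClosure.sub_mem hz hjL
  · simp [j, hzL f hf]

theorem closure_image_subset_range_inclusionInDoubleDualWeak {A : Set E}
    (hA : ∀ x : ℕ → E, (∀ n, x n ∈ A) → ∃ z, IsConvexBlock x z ∧
      ∃ L : E, ∀ f : StrongDual ℝ E, Tendsto (fun n => f (z n)) atTop (𝓝 (f L))) :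
    closure (inclusionInDoubleDualWeak ℝ E '' (toWeakSpace ℝ E '' A)) ⊆
      range (inclusionInDoubleDualWeak ℝ E) := by
  intro ζ hζ
  have hz (G : Finset (StrongDual ℝ E)) (ε : ℝ) (hε : 0 < ε) :
      ∃ a ∈ A, ∀ f ∈ G, |WeakDual.toStrongDual ζ f - f a| < ε := by
    obtain ⟨-, ⟨-, ⟨a, ha, rfl⟩, rfl⟩, h⟩ :=
      WeakDual.exists_mem_forall_abs_sub_lt_of_mem_closure hζ G hε
    exact ⟨a, ha, h⟩
  obtain ⟨x, D, hxA, hD, hxz, hnorm⟩ := exists_seq_tendsto_on_norming_set _ hz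
  obtain ⟨w, hw, L, hL⟩ := hA x hxA
  refine ⟨toWeakSpace ℝ E L, ?_⟩
  have := eq_inclusionInDoubleDual_of_isConvexBlock hD hxz hnorm hw hL
  apply WeakDual.toStrongDual.injective
  ext f
  rw [this]
  rfl

theorem isCompact_closure_of_forall_isConvexBlock {A : Set E} (hA : Bornology.IsBounded A)
    (h : ∀ x : ℕ → E, (∀ n, x n ∈ A) → ∃ z, IsConvexBlock x z ∧
      ∃ L : E, ∀ f : StrongDual ℝ E, Tendsto (fun n => f (z n)) atTop (𝓝 (f L))) :
    IsCompact (closure (toWeakSpace ℝ E '' A)) :=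
  isCompact_closure_of_isBounded ℝ E _ (by rwa [(toWeakSpace ℝ E).injective.preimage_image])
    (closure_image_subset_range_inclusionInDoubleDualWeak h)

end Whitley

theorem stmt9_general {X : Type*} [NormedAddCommGroup X] [NormedSpace ℝ X]
    (A : Set X) (hA : Bornology.IsBounded A) :
    (IsCompact (closure (toWeakSpace ℝ X '' A)) ↔
      ∀ x : ℕ → X, (∀ n, x n ∈ A) →
        ∃ z : ℕ → X, IsConvexBlock x z ∧ ∃ L : X, Tendsto z atTop (𝓝 L)) ∧
    (IsCompact (closure (toWeakSpace ℝ X '' A)) ↔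
      ∀ x : ℕ → X, (∀ n, x n ∈ A) →
        ∃ z : ℕ → X, IsConvexBlock x z ∧ ∃ L : X,
          ∀ f : X →L[ℝ] ℝ, Tendsto (fun n => f (z n)) atTop (𝓝 (f L))) := by
  have h_norm := exists_isConvexBlock_tendsto_of_isCompact_closure (A := A)
  have h_cpt := isCompact_closure_of_forall_isConvexBlock hA
  have h_weak (x : ℕ → X) : (∃ z, IsConvexBlock x z ∧ ∃ L, Tendsto z atTop (𝓝 L)) →
      ∃ z, IsConvexBlock x z ∧
        ∃ L : X, ∀ f : X →L[ℝ] ℝ, Tendsto (fun n => f (z n)) atTop (𝓝 (f L))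
    | ⟨z, hz, L, hL⟩ => ⟨z, hz, L, fun f => (f.continuous.tendsto L).comp hL⟩
  exact ⟨⟨h_norm, fun h => h_cpt fun x hx => h_weak x (h x hx)⟩,
    ⟨fun hK x hx => h_weak x (h_norm hK x hx), h_cpt⟩⟩

theorem stmt9 {X : Type*} [NormedAddCommGroup X] [NormedSpace ℝ X] [CompleteSpace X]
    (A : Set X) (hA : Bornology.IsBounded A) :
    (IsCompact (closure (toWeakSpace ℝ X '' A)) ↔
      ∀ x : ℕ → X, (∀ n, x n ∈ A) →
        ∃ z : ℕ → X, IsConvexBlock x z ∧ ∃ L : X, Tendsto z atTop (𝓝 L)) ∧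
    (IsCompact (closure (toWeakSpace ℝ X '' A)) ↔
      ∀ x : ℕ → X, (∀ n, x n ∈ A) →
        ∃ z : ℕ → X, IsConvexBlock x z ∧ ∃ L : X,
          ∀ f : X →L[ℝ] ℝ, Tendsto (fun n => f (z n)) atTop (𝓝 (f L))) :=
  stmt9_general A hA
end
end

section
/- A Banach space X has the Grothendieck property if and only if G(X) = 0, where G(X) = sup over weak* null sequences (f_n) in B_{X*} of inf over convex block subsequences (g_n) of limsup_n ‖g_n‖. -/
open Filter Topology Metric Set NormedSpace

noncomputable section

variable (X : Type*) [NormedAddCommGroup X] [NormedSpace ℝ X]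

variable {X}

variable (X)

/-!
If `X` is Grothendieck, a weak* null sequence in `B_{X*}` is weakly null, so by Mazur's lemma it
has convex block subsequences of arbitrarily small norm. Conversely, if a weak* null `(f_n)` is not
weakly null, then up to sign some `Φ ∈ X**` satisfies `Φ (f_n) ≥ ε` along a subsequence. Rescaled
by its Banach–Steinhaus bound, that subsequence lies in `B_{X*}`, and `Φ ≥ δ` persists on all its
convex blocks `g`, so `‖g_n‖ ≥ δ / ‖Φ‖` and `G(X) > 0`.
-/

section ConvexBlock

variable {E : Type*} [NormedAddCommGroup E] [NormedSpace ℝ E]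

theorem IsConvexBlock.refl (x : ℕ → E) : IsConvexBlock x x :=
  ⟨id, rfl, strictMono_id, fun n => subset_convexHull ℝ _ ⟨n, ⟨le_rfl, n.lt_succ_self⟩, rfl⟩⟩

theorem IsConvexBlock.mem {x y : ℕ → E} (h : IsConvexBlock x y) {s : Set E} (hs : Convex ℝ s)
    (hx : ∀ n, x n ∈ s) (n : ℕ) : y n ∈ s := by
  obtain ⟨k, -, -, hy⟩ := h
  exact convexHull_min (by rintro _ ⟨m, -, rfl⟩; exact hx m) hs (hy n)

theorem IsConvexBlock.norm_le {x y : ℕ → E} (h : IsConvexBlock x y) {C : ℝ}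
    (hx : ∀ n, ‖x n‖ ≤ C) (n : ℕ) : ‖y n‖ ≤ C := by
  simpa using h.mem (convex_closedBall 0 C) (by simpa using hx) n

theorem IsConvexBlock.le_apply {x y : ℕ → E} (h : IsConvexBlock x y) {Φ : E →L[ℝ] ℝ} {δ : ℝ}
    (hx : ∀ n, δ ≤ Φ (x n)) (n : ℕ) : δ ≤ Φ (y n) :=
  h.mem (convex_halfSpace_ge Φ.toLinearMap.isLinear δ) hx n

theorem exists_isConvexBlock_of_forall_exists {x : ℕ → E} {P : E → Prop}
    (h : ∀ N, ∃ M, N < M ∧ ∃ y ∈ convexHull ℝ (x '' Ico N M), P y) :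
    ∃ y : ℕ → E, IsConvexBlock x y ∧ ∀ n, P (y n) := by
  choose M hNM y hy hPy using h
  let k : ℕ → ℕ := fun n => M^[n] 0
  have hk : ∀ n, k (n + 1) = M (k n) := fun n => Function.iterate_succ_apply' M n 0
  refine ⟨fun n => y (k n), ⟨k, rfl, strictMono_nat_of_lt_succ fun n => ?_, fun n => ?_⟩,
    fun n => hPy (k n)⟩
  · rw [hk]; exact hNM (k n)
  · rw [hk]; exact hy (k n)

theorem zero_mem_closure_convexHull_of_weaklyNull {x : ℕ → E} (hx : WeaklyNull E x) (N : ℕ) :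
    (0 : E) ∈ closure (convexHull ℝ (x '' Ici N)) := by
  by_contra h
  obtain ⟨Φ, u, hΦ0, hΦu⟩ :=
    geometric_hahn_banach_point_closed (convex_convexHull ℝ _).closure isClosed_closure h
  rw [map_zero] at hΦ0
  obtain ⟨n, hn, hNn⟩ :=
    (((hx Φ).eventually (gt_mem_nhds hΦ0)).and (eventually_ge_atTop N)).exists
  exact (hΦu _ (subset_closure (subset_convexHull ℝ _ ⟨n, hNn, rfl⟩))).not_gt hn

theorem convexHull_image_Ici_subset (x : ℕ → E) (N : ℕ) :
    convexHull ℝ (x '' Ici N) ⊆ ⋃ M, convexHull ℝ (x '' Ico N M) := by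
  refine convexHull_min ?_ (Directed.convex_iUnion ?_ fun M => convex_convexHull ℝ _)
  · rintro _ ⟨n, hn, rfl⟩
    exact mem_iUnion.2 ⟨n + 1, subset_convexHull ℝ _ ⟨n, ⟨hn, n.lt_succ_self⟩, rfl⟩⟩
  · exact Monotone.directed_le fun M M' h => convexHull_mono (image_mono (Ico_subset_Ico_right h))

/-- Mazur's lemma, in convex block form. -/
theorem exists_isConvexBlock_norm_le_of_weaklyNull {x : ℕ → E} (hx : WeaklyNull E x) {ε : ℝ}
    (hε : 0 < ε) : ∃ y : ℕ → E, IsConvexBlock x y ∧ ∀ n, ‖y n‖ ≤ ε := by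
  refine exists_isConvexBlock_of_forall_exists (P := (‖·‖ ≤ ε)) fun N => ?_
  obtain ⟨y, hy, hyε⟩ :=
    Metric.mem_closure_iff.1 (zero_mem_closure_convexHull_of_weaklyNull hx N) ε hε
  obtain ⟨M, hyM⟩ := mem_iUnion.1 (convexHull_image_Ici_subset x N hy)
  have hM : N < max M (N + 1) := lt_of_lt_of_le N.lt_succ_self (le_max_right _ _)
  refine ⟨_, hM, y, convexHull_mono (image_mono (Ico_subset_Ico_right (le_max_left _ _))) hyM, ?_⟩
  simpa using hyε.le

end ConvexBlock

section BlockNorm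

variable {E : Type*} [NormedAddCommGroup E] [NormedSpace ℝ E]

def convexBlockLimsupNorm (x : ℕ → E) : ℝ :=
  sInf { s | ∃ g, IsConvexBlock x g ∧ s = limsup (fun n => ‖g n‖) atTop }

variable {x : ℕ → E} {C : ℝ}

theorem IsConvexBlock.le_limsup_norm {g : ℕ → E} (hg : IsConvexBlock x g) (hx : ∀ n, ‖x n‖ ≤ C)
    {c : ℝ} (hc : ∀ n, c ≤ ‖g n‖) : c ≤ limsup (fun n => ‖g n‖) atTop :=
  le_limsup_of_frequently_le (Frequently.of_forall hc) (isBoundedUnder_of ⟨C, hg.norm_le hx⟩)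

theorem le_convexBlockLimsupNorm (hx : ∀ n, ‖x n‖ ≤ C) {c : ℝ}
    (hc : ∀ g, IsConvexBlock x g → ∀ n, c ≤ ‖g n‖) : c ≤ convexBlockLimsupNorm x :=
  le_csInf ⟨_, x, .refl x, rfl⟩ fun _ ⟨g, hg, hs⟩ => hs ▸ hg.le_limsup_norm hx (hc g hg)

theorem convexBlockLimsupNorm_le (hx : ∀ n, ‖x n‖ ≤ C) {g : ℕ → E} (hg : IsConvexBlock x g)
    {c : ℝ} (hgc : ∀ n, ‖g n‖ ≤ c) : convexBlockLimsupNorm x ≤ c := by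
  have hbdd : BddBelow { s | ∃ g, IsConvexBlock x g ∧ s = limsup (fun n => ‖g n‖) atTop } :=
    ⟨0, fun _ ⟨g, hg, hs⟩ => hs ▸ hg.le_limsup_norm hx fun n => norm_nonneg _⟩
  calc convexBlockLimsupNorm x ≤ limsup (fun n => ‖g n‖) atTop := csInf_le hbdd ⟨g, hg, rfl⟩
    _ ≤ c := limsup_le_of_le (isCoboundedUnder_le_of_le atTop fun n => norm_nonneg _)
        (Eventually.of_forall hgc)

theorem convexBlockLimsupNorm_eq_zero_of_weaklyNull (hx : ∀ n, ‖x n‖ ≤ C) (hw : WeaklyNull E x) :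
    convexBlockLimsupNorm x = 0 := by
  refine le_antisymm (le_of_forall_pos_le_add fun ε hε => ?_)
    (le_convexBlockLimsupNorm hx fun _ _ _ => norm_nonneg _)
  obtain ⟨g, hg, hgε⟩ := exists_isConvexBlock_norm_le_of_weaklyNull hw hε
  simpa using convexBlockLimsupNorm_le hx hg hgε

theorem convexBlockLimsupNorm_pos (hx : ∀ n, ‖x n‖ ≤ C) {Φ : E →L[ℝ] ℝ} {δ : ℝ} (hδ : 0 < δ)
    (hΦ : ∀ n, δ ≤ Φ (x n)) : 0 < convexBlockLimsupNorm x := by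
  have hΦ0 : 0 < ‖Φ‖ := norm_pos_iff.2 fun h => by simpa [h] using hδ.trans_le (hΦ 0)
  refine (div_pos hδ hΦ0).trans_le (le_convexBlockLimsupNorm hx fun g hg n => ?_)
  refine div_le_of_le_mul₀ hΦ0.le (norm_nonneg _) ?_
  calc δ ≤ Φ (g n) := hg.le_apply hΦ n
    _ ≤ ‖Φ (g n)‖ := Real.le_norm_self _
    _ ≤ ‖g n‖ * ‖Φ‖ := (Φ.le_opNorm _).trans_eq (mul_comm _ _)

end BlockNorm

theorem Real.exists_frequently_le_of_not_tendsto_zero {u : ℕ → ℝ}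
    (hu : ¬Tendsto u atTop (𝓝 0)) :
    ∃ ε > 0, (∃ᶠ n in atTop, ε ≤ u n) ∨ ∃ᶠ n in atTop, ε ≤ -u n := by
  obtain ⟨ε, hε, hfreq⟩ : ∃ ε > 0, ∃ᶠ n in atTop, ε ≤ |u n| := by
    simpa [Metric.tendsto_atTop, Real.dist_eq, frequently_atTop] using hu
  exact ⟨ε, hε, frequently_or_distrib.1 (hfreq.mono fun n => le_abs.1)⟩

section Dual

variable {X : Type*} [NormedAddCommGroup X] [NormedSpace ℝ X] {f : ℕ → X →L[ℝ] ℝ}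

theorem WeakStarNull.zero : WeakStarNull X 0 := fun _ => tendsto_const_nhds

theorem WeakStarNull.smul_comp (hf : WeakStarNull X f) (c : ℝ) {φ : ℕ → ℕ}
    (hφ : Tendsto φ atTop atTop) : WeakStarNull X fun n => c • f (φ n) := fun x => by
  simpa using ((hf x).comp hφ).const_mul c

theorem WeakStarNull.exists_norm_le [CompleteSpace X] (hf : WeakStarNull X f) :
    ∃ C, ∀ n, ‖f n‖ ≤ C :=
  banach_steinhaus fun x => by
    obtain ⟨C, hC⟩ := (hf x).norm.bddAbove_range
    exact ⟨C, fun n => hC ⟨n, rfl⟩⟩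

theorem GQ_eq : GQ X = sSup { r | ∃ f : ℕ → X →L[ℝ] ℝ, (∀ n, ‖f n‖ ≤ 1) ∧ WeakStarNull X f ∧
    r = convexBlockLimsupNorm f } := rfl

theorem convexBlockLimsupNorm_le_GQ (hb : ∀ n, ‖f n‖ ≤ 1) (hf : WeakStarNull X f) :
    convexBlockLimsupNorm f ≤ GQ X :=
  le_csSup ⟨1, fun _ ⟨f, hb, _, hr⟩ => hr ▸ convexBlockLimsupNorm_le hb (.refl f) hb⟩
    ⟨f, hb, hf, rfl⟩

theorem GQ_eq_zero_of_grothendieck (hG : Grothendieck X) : GQ X = 0 := by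
  have hne : { r | ∃ f : ℕ → X →L[ℝ] ℝ, (∀ n, ‖f n‖ ≤ 1) ∧ WeakStarNull X f ∧
      r = convexBlockLimsupNorm f }.Nonempty :=
    ⟨_, 0, by simp, .zero, rfl⟩
  rw [GQ_eq, hne.subset_singleton_iff.1 fun _ ⟨f, hb, hf, hr⟩ =>
    hr ▸ convexBlockLimsupNorm_eq_zero_of_weaklyNull hb (hG f hf), csSup_singleton]

theorem GQ_pos_of_frequently_le [CompleteSpace X] (hf : WeakStarNull X f)
    {Φ : (X →L[ℝ] ℝ) →L[ℝ] ℝ} {ε : ℝ} (hε : 0 < ε) (hfreq : ∃ᶠ n in atTop, ε ≤ Φ (f n)) :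
    0 < GQ X := by
  obtain ⟨φ, hφ, hΦφ⟩ := extraction_of_frequently_atTop hfreq
  obtain ⟨C, hC⟩ := hf.exists_norm_le
  set D := max C 1
  have hD : 0 < D := zero_lt_one.trans_le (le_max_right _ _)
  let f' : ℕ → X →L[ℝ] ℝ := fun n => D⁻¹ • f (φ n)
  have hb : ∀ n, ‖f' n‖ ≤ 1 := fun n => by
    rw [norm_smul, norm_inv, Real.norm_of_nonneg hD.le, inv_mul_le_one₀ hD]
    exact (hC _).trans (le_max_left _ _)
  have hΦ : ∀ n, D⁻¹ * ε ≤ Φ (f' n) := fun n => by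
    simpa [f'] using mul_le_mul_of_nonneg_left (hΦφ n) (inv_nonneg.2 hD.le)
  exact (convexBlockLimsupNorm_pos hb (mul_pos (inv_pos.2 hD) hε) hΦ).trans_le
    (convexBlockLimsupNorm_le_GQ hb (hf.smul_comp D⁻¹ hφ.tendsto_atTop))

end Dual

theorem stmt11 {X : Type*} [NormedAddCommGroup X] [NormedSpace ℝ X] [CompleteSpace X] :
    Grothendieck X ↔ GQ X = 0 := by
  refine ⟨GQ_eq_zero_of_grothendieck, fun hGQ f hf Φ => by_contra fun hΦ => ?_⟩
  obtain ⟨ε, hε, hfreq | hfreq⟩ := Real.exists_frequently_le_of_not_tendsto_zero hΦ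
  · exact (GQ_pos_of_frequently_le hf hε hfreq).ne' hGQ
  · exact (GQ_pos_of_frequently_le hf (Φ := -Φ) hε hfreq).ne' hGQ
end
end
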